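/- Let R be a unique factorization domain with a ring involution *, and let λ, μ, ν be pairwise non-*-associate irreducibles of R, each an associate of its own image under * (self-dual). Let K = ℕ⁴ with componentwise addition, let π : ℕ⁴ → ℤ be π(a,b,c,d) = a − b + c − d, and let χ(a,b,c,d) = (λμ)^{a+b}·(μν)^{c+d}. Then: (i) for every irreducible ζ of R, if χ(v) is an associate of S(ζ)^k for some k ≥ 0 then v = 0 (so every C_ζ is trivial and Φ_L is not surjective, since ℤ ≠ 0 and Δ is trivial); (ii) if μ does not divide χ(v) then v = 0 (so C^μ is trivial); (iii) for every irreducible ζ of R not *-associate to μ and every n ∈ ℤ, there exists v ∈ ℕ⁴ with π(v) = n and ζ not dividing χ(v) (so C^ζ = ℤ for all such ζ, and hence Φ_R is an isomorphism). -/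

import Mathlib

/-!
A prime dividing a power of `S(ζ) ∣ ζ ζ*` divides `ζ` or `ζ*`, so it is `*`-associate to `ζ`;
since `*`-associateness is an equivalence relation, all prime factors of an associate of
`S(ζ)^k` are `*`-associate to one another. But for `v ≠ 0` the value `χ(v)` is divisible by
`λ` and `μ` or by `μ` and `ν`, and in either case by `μ`. Conversely, an irreducible `ζ` not
associate to `μ` divides at most one of `λμ` and `μν` (as `λ` and `ν` are not associate), so
`n` is realised as `π(v)` with `ζ ∤ χ(v)` by a `v` supported on the other pair of coordinates.
-/

open Classical in
/-- `S(ζ)`: `ζ` itself if `ζ` is an associate of its involutive image `ζ*`,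
and `ζ · ζ*` otherwise. -/
noncomputable def Sdual {R : Type*} [CommRing R] (σ : R →+* R) (l : R) : R :=
  if Associated l (σ l) then l else l * σ l

/-- `λ` and `μ` are `*`-associates: `λ` is an associate of `μ` or of `μ* = σ μ`. -/
def StarAssoc {R : Type*} [CommRing R] (σ : R →+* R) (l m : R) : Prop :=
  Associated l m ∨ Associated l (σ m)

section StarAssoc

variable {R : Type*} [CommRing R] {σ : R →+* R}

theorem Associated.starAssoc {p q : R} (h : Associated p q) : StarAssoc σ p q :=
  Or.inl h

theorem StarAssoc.symm (hσ : Function.Involutive σ) {p q : R} (h : StarAssoc σ p q) :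
    StarAssoc σ q p := by
  rcases h with h | h
  · exact Or.inl h.symm
  · right
    simpa only [hσ q] using (h.map σ).symm

theorem StarAssoc.trans (hσ : Function.Involutive σ) {p q r : R} (hpq : StarAssoc σ p q)
    (hqr : StarAssoc σ q r) : StarAssoc σ p r := by
  rcases hpq with hpq | hpq <;> rcases hqr with hqr | hqr
  · exact Or.inl (hpq.trans hqr)
  · exact Or.inr (hpq.trans hqr)
  · exact Or.inr (hpq.trans (hqr.map σ))
  · left
    simpa only [hσ r] using hpq.trans (hqr.map σ)

theorem Irreducible.map_of_involutive (hσ : Function.Involutive σ) {x : R}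
    (hx : Irreducible x) : Irreducible (σ x) :=
  (MulEquiv.irreducible_iff (RingEquiv.ofBijective σ hσ.bijective)).2 hx

theorem Sdual_dvd_mul_map (σ : R →+* R) (ζ : R) : Sdual σ ζ ∣ ζ * σ ζ := by
  unfold Sdual
  split_ifs
  exacts [dvd_mul_right ζ (σ ζ), dvd_rfl]

variable [UniqueFactorizationMonoid R]

theorem starAssoc_of_dvd_Sdual_pow (hσ : Function.Involutive σ) {p ζ : R} (hp : Irreducible p)
    (hζ : Irreducible ζ) {k : ℕ} (h : p ∣ Sdual σ ζ ^ k) : StarAssoc σ p ζ := by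
  have hpp : Prime p := UniqueFactorizationMonoid.irreducible_iff_prime.1 hp
  have hdvd : p ∣ ζ * σ ζ :=
    hpp.dvd_of_dvd_pow (h.trans (pow_dvd_pow_of_dvd (Sdual_dvd_mul_map σ ζ) k))
  exact (hpp.dvd_or_dvd hdvd).imp (hp.associated_of_dvd hζ)
    (hp.associated_of_dvd (hζ.map_of_involutive hσ))

end StarAssoc

theorem not_dvd_mul_or_not_dvd_mul {R : Type*} [CommMonoidWithZero R]
    [UniqueFactorizationMonoid R] {ζ l m n : R} (hζ : Irreducible ζ) (hl : Irreducible l)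
    (hm : Irreducible m) (hn : Irreducible n) (hζm : ¬ Associated ζ m)
    (hln : ¬ Associated l n) :
    ¬ ζ ∣ l * m ∨ ¬ ζ ∣ m * n := by
  have hζp : Prime ζ := UniqueFactorizationMonoid.irreducible_iff_prime.1 hζ
  by_contra! ⟨hlm, hmn⟩
  rcases hζp.dvd_or_dvd hlm with hζl | hζm'
  · rcases hζp.dvd_or_dvd hmn with hζm' | hζn
    · exact hζm (hζ.associated_of_dvd hm hζm')
    · exact hln ((hζ.associated_of_dvd hl hζl).symm.trans (hζ.associated_of_dvd hn hζn))
  · exact hζm (hζ.associated_of_dvd hm hζm')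

theorem quadruple_eq_zero {v : ℕ × ℕ × ℕ × ℕ} (h₁ : v.1 + v.2.1 = 0)
    (h₂ : v.2.2.1 + v.2.2.2 = 0) : v = (0, 0, 0, 0) := by
  obtain ⟨a, b, c, d⟩ := v
  simp only [Prod.mk.injEq] at h₁ h₂ ⊢
  omega

theorem statement11_general
    {R : Type*} [CommRing R] [UniqueFactorizationMonoid R]
    (σ : R →+* R) (hσ : ∀ r, σ (σ r) = r)
    (lam mu nu : R)
    (hlirr : Irreducible lam) (hmirr : Irreducible mu) (hnirr : Irreducible nu)
    (hlm : ¬ StarAssoc σ lam mu) (hln : ¬ StarAssoc σ lam nu)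
    (hmn : ¬ StarAssoc σ mu nu)
    (pi : ℕ × ℕ × ℕ × ℕ → ℤ)
    (hpi : ∀ v : ℕ × ℕ × ℕ × ℕ,
      pi v = (v.1 : ℤ) - (v.2.1 : ℤ) + (v.2.2.1 : ℤ) - (v.2.2.2 : ℤ))
    (chi : ℕ × ℕ × ℕ × ℕ → R)
    (hchi : ∀ v : ℕ × ℕ × ℕ × ℕ,
      chi v = (lam * mu) ^ (v.1 + v.2.1) * (mu * nu) ^ (v.2.2.1 + v.2.2.2)) :
    -- (i) every `C_ζ` is trivial, so `Φ_L` is not surjective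
    (∀ ζ : R, Irreducible ζ →
      ∀ v, (∃ k : ℕ, Associated (chi v) (Sdual σ ζ ^ k)) → v = (0, 0, 0, 0)) ∧
    -- (ii) `C^μ` is trivial
    (∀ v, ¬ mu ∣ chi v → v = (0, 0, 0, 0)) ∧
    -- (iii) `C^ζ = ℤ` for every irreducible `ζ` not `*`-associate to `μ`
    (∀ ζ : R, Irreducible ζ → ¬ StarAssoc σ ζ mu →
      ∀ n : ℤ, ∃ v, pi v = n ∧ ¬ ζ ∣ chi v) := by
  refine ⟨?_, ?_, ?_⟩
  · rintro ζ hζ v ⟨k, hk⟩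
    have hstar : ∀ {p}, Irreducible p → p ∣ chi v → StarAssoc σ p ζ := fun hp h =>
      starAssoc_of_dvd_Sdual_pow hσ hp hζ (h.trans hk.dvd)
    rw [hchi] at hstar
    refine quadruple_eq_zero ?_ ?_ <;> by_contra h
    · exact hlm <| (hstar hlirr ((dvd_pow (dvd_mul_right lam mu) h).mul_right _)).trans hσ
        ((hstar hmirr ((dvd_pow (dvd_mul_left mu lam) h).mul_right _)).symm hσ)
    · exact hmn <| (hstar hmirr ((dvd_pow (dvd_mul_right mu nu) h).mul_left _)).trans hσ
        ((hstar hnirr ((dvd_pow (dvd_mul_left nu mu) h).mul_left _)).symm hσ)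
  · intro v hv
    rw [hchi] at hv
    refine quadruple_eq_zero ?_ ?_ <;> by_contra h <;> apply hv
    · exact (dvd_pow (dvd_mul_left mu lam) h).mul_right _
    · exact (dvd_pow (dvd_mul_right mu nu) h).mul_left _
  · intro ζ hζ hζm n
    have hζp : Prime ζ := UniqueFactorizationMonoid.irreducible_iff_prime.1 hζ
    rcases not_dvd_mul_or_not_dvd_mul hζ hlirr hmirr hnirr (hζm ∘ Associated.starAssoc)
      (hln ∘ Associated.starAssoc) with h | h
    · refine ⟨(n.toNat, (-n).toNat, 0, 0), by simp [hpi], ?_⟩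
      simpa [hchi] using mt hζp.dvd_of_dvd_pow h
    · refine ⟨(0, 0, n.toNat, (-n).toNat), by simp [hpi], ?_⟩
      simpa [hchi] using mt hζp.dvd_of_dvd_pow h

/-- The paper's example showing that right primary decomposability does not imply
left primary decomposability: `K = ℕ⁴`, `C = ℤ`, `π(a,b,c,d) = a - b + c - d`,
`χ(a,b,c,d) = (λμ)^{a+b}·(μν)^{c+d}` for pairwise non-`*`-associate self-dual
irreducibles `λ, μ, ν`. -/
theorem statement11
    {R : Type*} [CommRing R] [IsDomain R] [UniqueFactorizationMonoid R]
    (σ : R →+* R) (hσ : ∀ r, σ (σ r) = r)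
    (lam mu nu : R)
    (hlirr : Irreducible lam) (hmirr : Irreducible mu) (hnirr : Irreducible nu)
    (hlsd : Associated lam (σ lam)) (hmsd : Associated mu (σ mu))
    (hnsd : Associated nu (σ nu))
    (hlm : ¬ StarAssoc σ lam mu) (hln : ¬ StarAssoc σ lam nu)
    (hmn : ¬ StarAssoc σ mu nu)
    (pi : ℕ × ℕ × ℕ × ℕ → ℤ)
    (hpi : ∀ v : ℕ × ℕ × ℕ × ℕ,
      pi v = (v.1 : ℤ) - (v.2.1 : ℤ) + (v.2.2.1 : ℤ) - (v.2.2.2 : ℤ))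
    (chi : ℕ × ℕ × ℕ × ℕ → R)
    (hchi : ∀ v : ℕ × ℕ × ℕ × ℕ,
      chi v = (lam * mu) ^ (v.1 + v.2.1) * (mu * nu) ^ (v.2.2.1 + v.2.2.2)) :
    -- (i) every `C_ζ` is trivial, so `Φ_L` is not surjective
    (∀ ζ : R, Irreducible ζ →
      ∀ v, (∃ k : ℕ, Associated (chi v) (Sdual σ ζ ^ k)) → v = (0, 0, 0, 0)) ∧
    -- (ii) `C^μ` is trivial
    (∀ v, ¬ mu ∣ chi v → v = (0, 0, 0, 0)) ∧
    -- (iii) `C^ζ = ℤ` for every irreducible `ζ` not `*`-associate to `μ`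
    (∀ ζ : R, Irreducible ζ → ¬ StarAssoc σ ζ mu →
      ∀ n : ℤ, ∃ v, pi v = n ∧ ¬ ζ ∣ chi v) :=
  statement11_general σ hσ lam mu nu hlirr hmirr hnirr hlm hln hmn pi hpi chi hchi
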